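/- arXiv:0903.2490 — 6 statements merged into one kernel-verified Lean document; each statement's English description precedes it below -/
import Mathlib

section
/- Let R be a ring such that for every pair of nonisomorphic simple right R-modules S and T one has Ext^1_R(S,T) = {0}. Then every right R-module of finite length whose endomorphism ring is a division ring is a simple module. -/
/-!
Let `s` be a simple submodule of `M`; we show that `M` maps onto `s`, by induction along a
composition series. If `N ⊆ M` has finite length and `M ⧸ N` is simple, either `s ⊄ N`, and then
`M = N ⊕ s`; or `N` maps onto `s` by induction. In the latter case, if `M ⧸ N ≇ s`, then
`Ext¹(M ⧸ N, s) = 0` makes the pushout of `0 → N → M → M ⧸ N → 0` along `N → s` split, so the map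
extends to `M`; if `M ⧸ N ≅ s` there is nothing to do. Composing `M → s` with the inclusion gives a
nonzero, hence invertible, endomorphism of `M`, so `M ≅ s`.
-/

universe u

open CategoryTheory

/-- `Ext¹_A(S, T) = 0`, formulated via the `Ext` functor on the category of `A`-modules.
Right `R`-modules are treated as modules over `A = Rᵐᵒᵖ`. -/
def Ext1IsZero (A : Type u) [Ring A] (S T : Type u) [AddCommGroup S] [Module A S]
    [AddCommGroup T] [Module A T] : Prop :=
  Subsingleton (((Ext ℤ (ModuleCat.{u} A) 1).obj (Opposite.op (ModuleCat.of A S))).obj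
    (ModuleCat.of A T))

/-- The endomorphism ring of the `A`-module `M` is a division ring:
it is nontrivial and every nonzero endomorphism is invertible. -/
def EndIsDivisionRing (A : Type*) [Ring A] (M : Type*) [AddCommGroup M] [Module A M] : Prop :=
  Nontrivial (Module.End A M) ∧ ∀ f : Module.End A M, f ≠ 0 → IsUnit f

/-- The `A`-module `M` is isotypic: all of its simple subquotients are isomorphic. -/
def IsIsotypicModule (A : Type*) [Ring A] (M : Type*) [AddCommGroup M] [Module A M] : Prop :=
  ∀ (p₁ p₂ : Submodule A M) (q₁ : Submodule A p₁) (q₂ : Submodule A p₂),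
    IsSimpleModule A (p₁ ⧸ q₁) → IsSimpleModule A (p₂ ⧸ q₂) →
      Nonempty ((p₁ ⧸ q₁) ≃ₗ[A] (p₂ ⧸ q₂))

namespace CategoryTheory

open Limits

variable {R : Type*} [Ring R] {C : Type*} [Category* C] [Abelian C] [Linear R C]
  [EnoughProjectives C]

theorem ProjectiveResolution.exists_d_comp_eq_of_subsingleton_ext {X Y : C}
    (P : ProjectiveResolution X) (hXY : Subsingleton (((Ext R C 1).obj (.op X)).obj Y))
    (φ : P.complex.X 1 ⟶ Y) (hφ : P.complex.d 2 1 ≫ φ = 0) :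
    ∃ ψ : P.complex.X 0 ⟶ Y, P.complex.d 1 0 ≫ ψ = φ := by
  have hH : IsZero ((P.complex.linearYonedaObj R Y).homology 1) :=
    ModuleCat.isZero_of_subsingleton _ |>.of_iso (P.isoExt 1 Y).symm
  have hexact := ((P.complex.linearYonedaObj R Y).exactAt_iff' 0 1 2 (by simp) (by simp)).mp
    ((HomologicalComplex.exactAt_iff_isZero_homology _ _).mpr hH)
  exact (ShortComplex.moduleCat_exact_iff _).mp hexact φ hφ

theorem ShortComplex.ShortExact.nonempty_splitting_of_subsingleton_ext {S : ShortComplex C}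
    (hS : S.ShortExact) (hext : Subsingleton (((Ext R C 1).obj (.op S.X₃)).obj S.X₁)) :
    Nonempty S.Splitting := by
  have : Epi S.g := hS.epi_g
  have : Mono S.f := hS.mono_f
  let P := ProjectiveResolution.of S.X₃
  let π₀ : P.complex.X 0 ⟶ S.X₃ := P.π.f 0
  have : Epi π₀ := inferInstanceAs (Epi (P.π.f 0))
  have hπ₀ : P.complex.d 1 0 ≫ π₀ = 0 := P.complex_d_comp_π_f_zero
  let l : P.complex.X 0 ⟶ S.X₂ := Projective.factorThru π₀ S.g
  have hl : l ≫ S.g = π₀ := Projective.factorThru_comp _ _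
  let φ : P.complex.X 1 ⟶ S.X₁ := hS.exact.lift (P.complex.d 1 0 ≫ l) (by simp [hl, hπ₀])
  have hφ : φ ≫ S.f = P.complex.d 1 0 ≫ l := hS.exact.lift_f _ _
  obtain ⟨ψ, hψ⟩ := P.exists_d_comp_eq_of_subsingleton_ext hext φ (by
    rw [← cancel_mono S.f, Category.assoc, hφ, ← Category.assoc, HomologicalComplex.d_comp_d,
      zero_comp, zero_comp])
  obtain ⟨s, hs⟩ := CokernelCofork.IsColimit.desc' P.isColimitCokernelCofork (l - ψ ≫ S.f) (by
    simp [Preadditive.comp_sub, reassoc_of% hψ, hφ])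
  -- `l` corrected by the coboundary `ψ` kills the image of `d`, so it descends to a section.
  let s' : S.X₃ ⟶ S.X₂ := s
  have hs' : π₀ ≫ s' = l - ψ ≫ S.f := hs
  refine ⟨.ofExactOfSection S hS.exact s' ?_ hS.mono_f⟩
  rw [← cancel_epi π₀, reassoc_of% hs']
  simp [hl]

end CategoryTheory

section

variable {A : Type u} [Ring A]

theorem Ext1IsZero.of_linearEquiv {X X' T T' : Type u} [AddCommGroup X] [Module A X]
    [AddCommGroup X'] [Module A X'] [AddCommGroup T] [Module A T] [AddCommGroup T'] [Module A T']
    (e₁ : X ≃ₗ[A] X') (e₂ : T ≃ₗ[A] T') (h : Ext1IsZero A X T) : Ext1IsZero A X' T' :=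
  let e := ((Ext ℤ (ModuleCat.{u} A) 1).mapIso e₁.symm.toModuleIso.op).app (ModuleCat.of A T) ≪≫
    ((Ext ℤ (ModuleCat.{u} A) 1).obj _).mapIso e₂.toModuleIso
  @Equiv.subsingleton _ _ ((forget _).mapIso e).toEquiv.symm h

theorem Submodule.exists_leftInverse_subtype_of_ext1IsZero {E : Type u} [AddCommGroup E]
    [Module A E] (q : Submodule A E) (h : Ext1IsZero A (E ⧸ q) q) :
    ∃ r : E →ₗ[A] q, r ∘ₗ q.subtype = LinearMap.id := by
  let S := ModuleCat.shortComplexOfCompEqZero q.subtype q.mkQ (by ext; simp)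
  have hS : S.ShortExact := ModuleCat.shortComplex_shortExact S (LinearMap.exact_subtype_mkQ q)
    q.injective_subtype q.mkQ_surjective
  obtain ⟨σ⟩ := hS.nonempty_splitting_of_subsingleton_ext h
  exact ⟨σ.r.hom, congrArg ModuleCat.Hom.hom σ.f_r⟩

theorem Submodule.exists_extend_of_ext1IsZero {M S : Type u} [AddCommGroup M] [Module A M]
    [AddCommGroup S] [Module A S] {N : Submodule A M} (h : Ext1IsZero A (M ⧸ N) S)
    (g : N →ₗ[A] S) (hg : Function.Surjective g) :
    ∃ f : M →ₗ[A] S, f ∘ₗ N.subtype = g := by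
  -- `M ⧸ K` is the pushout of `M` along `g`: an extension of `M ⧸ N` by `N.map K.mkQ ≅ S`.
  let K := (LinearMap.ker g).map N.subtype
  let ι := K.mkQ ∘ₗ N.subtype
  have hrange : LinearMap.range ι = N.map K.mkQ := by
    rw [LinearMap.range_comp, Submodule.range_subtype]
  have hker : LinearMap.ker ι = LinearMap.ker g := by
    rw [LinearMap.ker_comp, Submodule.ker_mkQ,
      Submodule.comap_map_eq_of_injective N.injective_subtype]
  let e : N.map K.mkQ ≃ₗ[A] S := (LinearEquiv.ofEq _ _ hrange.symm).trans
    (ι.quotKerEquivRange.symm.trans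
      ((Submodule.quotEquivOfEq _ _ hker).trans (g.quotKerEquivOfSurjective hg)))
  have he : ∀ n : N, e ⟨ι n, Submodule.mem_map_of_mem n.2⟩ = g n := by
    intro n
    change g.quotKerEquivOfSurjective hg (Submodule.quotEquivOfEq _ _ hker
      (ι.quotKerEquivRange.symm ⟨ι n, LinearMap.mem_range_self ι n⟩)) = g n
    rw [ι.quotKerEquivRange_symm_apply_image]
    rfl
  obtain ⟨r, hr⟩ := (N.map K.mkQ).exists_leftInverse_subtype_of_ext1IsZero
    (h.of_linearEquiv (K.quotientQuotientEquivQuotient N (Submodule.map_subtype_le N _)).symm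
      e.symm)
  refine ⟨e ∘ₗ r ∘ₗ K.mkQ, LinearMap.ext fun n => ?_⟩
  rw [← he n]
  exact congrArg e (LinearMap.congr_fun hr ⟨ι n, _⟩)

theorem exists_surjective_of_injective_of_isFiniteLength
    (hext : ∀ (S T : Type u) [AddCommGroup S] [Module A S] [AddCommGroup T] [Module A T],
      IsSimpleModule A S → IsSimpleModule A T → IsEmpty (S ≃ₗ[A] T) → Ext1IsZero A S T)
    {S : Type u} [AddCommGroup S] [Module A S] [IsSimpleModule A S]
    {M : Type u} [AddCommGroup M] [Module A M] (hM : IsFiniteLength A M)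
    (ι : S →ₗ[A] M) (hι : Function.Injective ι) : ∃ f : M →ₗ[A] S, Function.Surjective f := by
  induction hM with
  | of_subsingleton =>
    have := IsSimpleModule.nontrivial A S
    exact absurd hι.subsingleton (not_subsingleton S)
  | @of_simple_quotient M _ _ N hN _ ih =>
    have of_equiv : Nonempty ((M ⧸ N) ≃ₗ[A] S) → ∃ f : M →ₗ[A] S, Function.Surjective f :=
      fun ⟨e⟩ => ⟨e.toLinearMap ∘ₗ N.mkQ, e.surjective.comp N.mkQ_surjective⟩
    by_cases hιN : LinearMap.range ι ≤ N
    · obtain ⟨g, hg⟩ := ih (ι.codRestrict N fun x => hιN ⟨x, rfl⟩)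
        fun x y hxy => hι (congrArg Subtype.val hxy)
      by_cases hNS : Nonempty ((M ⧸ N) ≃ₗ[A] S)
      · exact of_equiv hNS
      obtain ⟨f, hf⟩ := N.exists_extend_of_ext1IsZero
        (hext _ _ hN ‹_› (not_nonempty_iff.mp hNS)) g hg
      refine ⟨f, fun s => ?_⟩
      obtain ⟨n, rfl⟩ := hg s
      exact ⟨n, LinearMap.congr_fun hf n⟩
    · have hatom : IsAtom (LinearMap.range ι) :=
        isSimpleModule_iff_isAtom.mp (IsSimpleModule.congr (LinearEquiv.ofInjective ι hι).symm)
      have hcompl : IsCompl N (LinearMap.range ι) :=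
        ⟨(hatom.not_le_iff_disjoint.mp hιN).symm,
          (isSimpleModule_iff_isCoatom.mp hN).not_le_iff_codisjoint.mp hιN⟩
      exact of_equiv ⟨(N.quotientEquivOfIsCompl _ hcompl).trans
        (LinearEquiv.ofInjective ι hι).symm⟩

end

theorem EndIsDivisionRing.nontrivial {A M : Type*} [Ring A] [AddCommGroup M] [Module A M]
    (hM : EndIsDivisionRing A M) : Nontrivial M := by
  by_contra h
  have := not_nontrivial_iff_subsingleton.mp h
  exact not_nontrivial (Module.End A M) hM.1

/-- If `Ext¹_R(S, T) = 0` for every pair of nonisomorphic simple right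
`R`-modules `S`, `T`, then every right `R`-module of finite length whose endomorphism ring
is a division ring is simple. -/
theorem isSimpleModule_of_finiteLength_of_endIsDivisionRing (R : Type u) [Ring R]
    (hext : ∀ (S T : Type u) [AddCommGroup S] [Module Rᵐᵒᵖ S] [AddCommGroup T] [Module Rᵐᵒᵖ T],
      IsSimpleModule Rᵐᵒᵖ S → IsSimpleModule Rᵐᵒᵖ T → IsEmpty (S ≃ₗ[Rᵐᵒᵖ] T) →
      Ext1IsZero Rᵐᵒᵖ S T)
    (M : Type u) [AddCommGroup M] [Module Rᵐᵒᵖ M]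
    (hfl : IsFiniteLength Rᵐᵒᵖ M) (hM : EndIsDivisionRing Rᵐᵒᵖ M) :
    IsSimpleModule Rᵐᵒᵖ M := by
  have : IsArtinian Rᵐᵒᵖ M := (isFiniteLength_iff_isNoetherian_isArtinian.mp hfl).2
  have : Nontrivial M := hM.nontrivial
  obtain ⟨s, hs, -⟩ := (eq_bot_or_exists_atom_le (⊤ : Submodule Rᵐᵒᵖ M)).resolve_left top_ne_bot
  have : IsSimpleModule Rᵐᵒᵖ s := isSimpleModule_iff_isAtom.mpr hs
  have := IsSimpleModule.nontrivial Rᵐᵒᵖ s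
  obtain ⟨f, hf⟩ := exists_surjective_of_injective_of_isFiniteLength hext hfl s.subtype
    s.injective_subtype
  have hunit : IsUnit (s.subtype ∘ₗ f) := hM.2 _ fun h0 =>
    LinearMap.ne_zero_of_surjective hf (LinearMap.ext fun x =>
      s.injective_subtype (LinearMap.congr_fun h0 x))
  have hf_inj : Function.Injective f :=
    ((Module.End.isUnit_iff _).mp hunit).injective.of_comp (f := s.subtype)
  exact IsSimpleModule.congr (LinearEquiv.ofBijective f ⟨hf_inj, hf⟩)
end

section
/- Let R be a ring and suppose that 0 → T → M → S → 0 is a non-split short exact sequence of right R-modules in which S and T are nonisomorphic simple modules. Then End(M_R) is a division ring, and there exist injective ring homomorphisms End(M_R) → End(S_R) and End(M_R) → End(T_R); in particular M is a non-simple module of length 2 whose endomorphism ring is a division ring. -/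
universe u

open CategoryTheory

/-!
Since `T` and `S` are simple, the image `K` of `T` is both an atom and a coatom in the lattice of
submodules of `M`; as it has no complement, `⊥`, `K`, `⊤` are the only submodules, so `K` is the
only simple submodule. Hence every endomorphism `e` maps `K` into `K` (the image of `K` is `0`
or simple). If `ker e = K`, then `range e ≅ M ⧸ K ≅ S` is simple, so `range e = K ≅ T`, which is
impossible; so a nonzero `e` is injective, and its range, isomorphic to the non-simple `M`, is
`⊤`. Thus `End M` is a division ring, and restricting to `K` and passing to `M ⧸ K` give ring
homomorphisms into `End T` and `End S`, injective as is any ring homomorphism out of a division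
ring.
-/

section Lattice

variable {α : Type*} [Lattice α] [BoundedOrder α] {a : α}

theorem eq_bot_or_eq_or_eq_top_of_not_exists_isCompl (ha : IsAtom a) (ha' : IsCoatom a)
    (hc : ¬ ∃ b, IsCompl a b) (x : α) : x = ⊥ ∨ x = a ∨ x = ⊤ := by
  rcases ha.le_iff.mp (inf_le_right : x ⊓ a ≤ a) with hinf | hinf <;>
    rcases ha'.le_iff.mp (le_sup_right : a ≤ x ⊔ a) with hsup | hsup
  · exact absurd ⟨x, disjoint_iff.mpr (inf_comm x a ▸ hinf),
      codisjoint_iff.mpr (sup_comm x a ▸ hsup)⟩ hc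
  · exact .inl (inf_eq_left.mpr (sup_eq_right.mp hsup) ▸ hinf)
  · exact .inr (.inr (sup_eq_left.mpr (inf_eq_right.mp hinf) ▸ hsup))
  · exact .inr (.inl (le_antisymm (sup_eq_right.mp hsup) (inf_eq_right.mp hinf)))

theorem eq_of_isAtom_of_not_exists_isCompl (ha : IsAtom a) (ha' : IsCoatom a)
    (hc : ¬ ∃ b, IsCompl a b) {x : α} (hx : IsAtom x) : x = a := by
  rcases eq_bot_or_eq_or_eq_top_of_not_exists_isCompl ha ha' hc x with h | h | h
  · exact absurd h hx.1
  · exact h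
  · exact absurd (hx.2 a (h ▸ ha'.lt_top)) ha.1

theorem exists_compositionSeries_length_two [IsModularLattice α] (ha : IsAtom a)
    (ha' : IsCoatom a) : ∃ s : CompositionSeries α, s.head = ⊥ ∧ s.last = ⊤ ∧ s.length = 2 := by
  refine ⟨⟨2, ![⊥, a, ⊤], fun i => ?_⟩, ?_, ?_, rfl⟩
  · fin_cases i
    exacts [ha.bot_covBy, ha'.covBy_top]
  all_goals rfl

end Lattice

theorem RingHom.injective_of_isUnit_of_ne_zero {R S : Type*} [Ring R] [Semiring S] [Nontrivial S]
    (hR : ∀ a : R, a ≠ 0 → IsUnit a) (φ : R →+* S) : Function.Injective φ := by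
  have := φ.domain_nontrivial
  let _ := DivisionRing.ofIsUnitOrEqZero fun a : R => (em (a = 0)).symm.imp_left (hR a)
  exact φ.injective

namespace Module.End

variable {A M : Type*} [Ring A] [AddCommGroup M] [Module A M]

def restrictRingHom (p : Submodule A M) (hp : ∀ e : Module.End A M, p ≤ p.comap e) :
    Module.End A M →+* Module.End A p where
  toFun e := e.restrict (hp e)
  map_one' := rfl
  map_mul' _ _ := rfl
  map_zero' := rfl
  map_add' _ _ := rfl

def mapQRingHom (p : Submodule A M) (hp : ∀ e : Module.End A M, p ≤ p.comap e) :
    Module.End A M →+* Module.End A (M ⧸ p) where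
  toFun e := p.mapQ p e (hp e)
  map_one' := by ext; rfl
  map_mul' _ _ := by ext; rfl
  map_zero' := by ext; rfl
  map_add' _ _ := by ext; rfl

end Module.End

section Module

variable {A M : Type*} [Ring A] [AddCommGroup M] [Module A M] {K : Submodule A M}

theorem not_isSimpleModule_of_isAtom_of_isCoatom (hK : IsAtom K) (hK' : IsCoatom K) :
    ¬ IsSimpleModule A M :=
  fun _ => (IsSimpleOrder.eq_bot_or_eq_top K).elim hK.1 hK'.1

theorem le_comap_of_not_exists_isCompl (hK : IsAtom K) (hK' : IsCoatom K)
    (hc : ¬ ∃ N, IsCompl K N) (e : Module.End A M) : K ≤ K.comap e := by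
  have := isSimpleModule_iff_isAtom.mpr hK
  rw [← Submodule.map_le_iff_le_comap, ← LinearMap.range_domRestrict]
  rcases (e.domRestrict K).injective_or_eq_zero with hinj | hzero
  · refine (eq_of_isAtom_of_not_exists_isCompl hK hK' hc ?_).le
    exact isSimpleModule_iff_isAtom.mp (.congr (LinearEquiv.ofInjective _ hinj).symm)
  · simp [hzero]

theorem ker_eq_bot_of_not_exists_isCompl (hK : IsAtom K) (hK' : IsCoatom K)
    (hc : ¬ ∃ N, IsCompl K N) (hKQ : IsEmpty ((M ⧸ K) ≃ₗ[A] K)) {e : Module.End A M}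
    (he : e ≠ 0) : LinearMap.ker e = ⊥ := by
  rcases eq_bot_or_eq_or_eq_top_of_not_exists_isCompl hK hK' hc (LinearMap.ker e) with h | h | h
  · exact h
  · have := isSimpleModule_iff_isCoatom.mpr hK'
    have eR : (M ⧸ K) ≃ₗ[A] LinearMap.range e :=
      (Submodule.quotEquivOfEq _ _ h.symm).trans e.quotKerEquivRange
    have hR : LinearMap.range e = K := eq_of_isAtom_of_not_exists_isCompl hK hK' hc
      (isSimpleModule_iff_isAtom.mp (.congr eR.symm))
    exact (hKQ.false (eR.trans (LinearEquiv.ofEq _ _ hR))).elim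
  · exact absurd (LinearMap.ker_eq_top.mp h) he

theorem range_eq_top_of_not_exists_isCompl (hK : IsAtom K) (hK' : IsCoatom K)
    (hc : ¬ ∃ N, IsCompl K N) {e : Module.End A M} (he : Function.Injective e) :
    LinearMap.range e = ⊤ := by
  rcases eq_bot_or_eq_or_eq_top_of_not_exists_isCompl hK hK' hc (LinearMap.range e) with h | h | h
  · obtain ⟨x, -, hx⟩ := Submodule.ne_bot_iff K |>.mp hK.1
    exact absurd (he (by simp [LinearMap.range_eq_bot.mp h] : e x = e 0)) hx
  · have := isSimpleModule_iff_isAtom.mpr hK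
    exact absurd (.congr ((LinearEquiv.ofInjective e he).trans (LinearEquiv.ofEq _ _ h)))
      (not_isSimpleModule_of_isAtom_of_isCoatom hK hK')
  · exact h

theorem isUnit_of_not_exists_isCompl (hK : IsAtom K) (hK' : IsCoatom K)
    (hc : ¬ ∃ N, IsCompl K N) (hKQ : IsEmpty ((M ⧸ K) ≃ₗ[A] K)) {e : Module.End A M}
    (he : e ≠ 0) : IsUnit e := by
  have hinj : Function.Injective e :=
    LinearMap.ker_eq_bot.mp (ker_eq_bot_of_not_exists_isCompl hK hK' hc hKQ he)
  exact (Module.End.isUnit_iff e).mpr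
    ⟨hinj, LinearMap.range_eq_top.mp (range_eq_top_of_not_exists_isCompl hK hK' hc hinj)⟩

end Module

/-- If `0 → T → M → S → 0` is a non-split short exact sequence of right
`R`-modules with `S`, `T` nonisomorphic simple modules, then `End(M)` is a division ring,
it embeds into `End(S)` and into `End(T)` as a ring, and `M` is a non-simple module of
length `2` whose endomorphism ring is a division ring. -/
theorem endIsDivisionRing_of_nonsplit_extension_of_simples (R : Type u) [Ring R]
    (T M S : Type u) [AddCommGroup T] [Module Rᵐᵒᵖ T] [AddCommGroup M] [Module Rᵐᵒᵖ M]
    [AddCommGroup S] [Module Rᵐᵒᵖ S]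
    (hS : IsSimpleModule Rᵐᵒᵖ S) (hT : IsSimpleModule Rᵐᵒᵖ T)
    (hST : IsEmpty (S ≃ₗ[Rᵐᵒᵖ] T))
    (f : T →ₗ[Rᵐᵒᵖ] M) (g : M →ₗ[Rᵐᵒᵖ] S)
    (hf : Function.Injective f) (hg : Function.Surjective g)
    (hfg : LinearMap.range f = LinearMap.ker g)
    (hnonsplit : ¬ ∃ N : Submodule Rᵐᵒᵖ M, IsCompl (LinearMap.range f) N) :
    EndIsDivisionRing Rᵐᵒᵖ M ∧
      (∃ φ : Module.End Rᵐᵒᵖ M →+* Module.End Rᵐᵒᵖ S, Function.Injective φ) ∧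
      (∃ ψ : Module.End Rᵐᵒᵖ M →+* Module.End Rᵐᵒᵖ T, Function.Injective ψ) ∧
      ¬ IsSimpleModule Rᵐᵒᵖ M ∧
      (∃ s : CompositionSeries (Submodule Rᵐᵒᵖ M), s.head = ⊥ ∧ s.last = ⊤ ∧ s.length = 2) := by
  set K := LinearMap.range f
  have eT : T ≃ₗ[Rᵐᵒᵖ] K := LinearEquiv.ofInjective f hf
  have eS : (M ⧸ K) ≃ₗ[Rᵐᵒᵖ] S :=
    (Submodule.quotEquivOfEq _ _ hfg).trans (g.quotKerEquivOfSurjective hg)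
  have hK : IsAtom K := isSimpleModule_iff_isAtom.mp (.congr eT.symm)
  have hK' : IsCoatom K := isSimpleModule_iff_isCoatom.mp (.congr eS)
  have hKQ : IsEmpty ((M ⧸ K) ≃ₗ[Rᵐᵒᵖ] K) :=
    ⟨fun e => hST.false (eS.symm.trans (e.trans eT.symm))⟩
  have hunit : ∀ e : Module.End Rᵐᵒᵖ M, e ≠ 0 → IsUnit e :=
    fun _ => isUnit_of_not_exists_isCompl hK hK' hnonsplit hKQ
  have hinv := le_comap_of_not_exists_isCompl hK hK' hnonsplit
  have := IsSimpleModule.nontrivial Rᵐᵒᵖ S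
  have := IsSimpleModule.nontrivial Rᵐᵒᵖ T
  let φ := eS.conjRingEquiv.toRingHom.comp (Module.End.mapQRingHom K hinv)
  let ψ := eT.symm.conjRingEquiv.toRingHom.comp (Module.End.restrictRingHom K hinv)
  exact ⟨⟨φ.domain_nontrivial, hunit⟩, ⟨φ, φ.injective_of_isUnit_of_ne_zero hunit⟩,
    ⟨ψ, ψ.injective_of_isUnit_of_ne_zero hunit⟩, not_isSimpleModule_of_isAtom_of_isCoatom hK hK',
    exists_compositionSeries_length_two hK hK'⟩
end

section
/- Let R be a ring such that for some pair of nonisomorphic simple right R-modules S and T one has Ext^1_R(S,T) ≠ {0}. Then there exists a right R-module M of finite length that is not simple and whose endomorphism ring End(M_R) is a division ring. -/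
universe u

open CategoryTheory

/-- The `A`-module `M` is isotypic: all of its simple subquotients are isomorphic. -/
def IsIsotypic' (A : Type*) [Ring A] (M : Type*) [AddCommGroup M] [Module A M] : Prop :=
  ∀ (p₁ p₂ : Submodule A M) (q₁ : Submodule A p₁) (q₂ : Submodule A p₂),
    IsSimpleModule A (p₁ ⧸ q₁) → IsSimpleModule A (p₂ ⧸ q₂) →
      Nonempty ((p₁ ⧸ q₁) ≃ₗ[A] (p₂ ⧸ q₂))

/-! A nonzero class in `Ext¹(S, T)` is a cocycle `f : P₁ → T` on a projective resolution of `S`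
that does not extend over `P₁ → P₀`; pushing `P₁ → P₀ → S` out along `f` yields a non-split
extension `0 → T → M → S → 0`. Non-splitness leaves `T` as the only proper nonzero submodule of
the length-two module `M`. So a nonzero endomorphism of `M` is injective, hence bijective, unless
its kernel is `T`; but then its image is isomorphic to `S`, which is neither `T` nor `M`. -/

namespace LinearMap

variable {A P₁ P₀ T M : Type*} [Ring A] [AddCommGroup P₁] [Module A P₁] [AddCommGroup P₀]
  [Module A P₀] [AddCommGroup T] [Module A T] [AddCommGroup M] [Module A M]
  (f : P₁ →ₗ[A] T) (d : P₁ →ₗ[A] P₀)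

abbrev Pushout : Type _ := (T × P₀) ⧸ range (f.prod (-d))

def pushoutInl : T →ₗ[A] Pushout f d := (range (f.prod (-d))).mkQ ∘ₗ inl A T P₀

def pushoutInr : P₀ →ₗ[A] Pushout f d := (range (f.prod (-d))).mkQ ∘ₗ inr A T P₀

theorem pushoutInr_comp : pushoutInr f d ∘ₗ d = pushoutInl f d ∘ₗ f := by
  ext x
  refine (Submodule.Quotient.eq _).mpr ⟨-x, ?_⟩
  simp

theorem pushoutInl_injective (h : ker d ≤ ker f) : Function.Injective (pushoutInl f d) := by
  refine (injective_iff_map_eq_zero _).mpr fun t ht ↦ ?_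
  obtain ⟨x, hx⟩ := (Submodule.Quotient.mk_eq_zero _).mp ht
  obtain ⟨hfx, hdx⟩ := Prod.ext_iff.mp hx
  simp only [prod_apply, Function.prod, neg_apply, inl_apply, neg_eq_zero] at hfx hdx
  rw [← hfx]
  exact h hdx

def pushoutDesc (g : T →ₗ[A] M) (k : P₀ →ₗ[A] M) (w : g ∘ₗ f = k ∘ₗ d) : Pushout f d →ₗ[A] M :=
  (range (f.prod (-d))).liftQ (g.coprod k) <| by
    rintro _ ⟨x, rfl⟩
    simpa [← sub_eq_add_neg, sub_eq_zero] using congr($w x)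

@[simp]
theorem pushoutDesc_comp_pushoutInl (g : T →ₗ[A] M) (k : P₀ →ₗ[A] M) (w : g ∘ₗ f = k ∘ₗ d) :
    pushoutDesc f d g k w ∘ₗ pushoutInl f d = g := by
  ext; simp [pushoutDesc, pushoutInl]

@[simp]
theorem pushoutDesc_comp_pushoutInr (g : T →ₗ[A] M) (k : P₀ →ₗ[A] M) (w : g ∘ₗ f = k ∘ₗ d) :
    pushoutDesc f d g k w ∘ₗ pushoutInr f d = k := by
  ext; simp [pushoutDesc, pushoutInr]

theorem exact_pushoutInl_pushoutDesc {π : P₀ →ₗ[A] M} (h : Function.Exact d π)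
    (w : 0 ∘ₗ f = π ∘ₗ d) : Function.Exact (pushoutInl f d) (pushoutDesc f d 0 π w) := by
  refine fun y ↦ ⟨fun hy ↦ ?_, ?_⟩
  · obtain ⟨⟨t, q⟩, rfl⟩ := Submodule.Quotient.mk_surjective _ y
    obtain ⟨x, rfl⟩ := (h q).mp (by simpa [pushoutDesc] using hy)
    exact ⟨t + f x, (Submodule.Quotient.eq _).mpr ⟨x, by simp⟩⟩
  · rintro ⟨t, rfl⟩
    exact congr($(pushoutDesc_comp_pushoutInl f d 0 π w) t)

theorem pushoutDesc_surjective (g : T →ₗ[A] M) {k : P₀ →ₗ[A] M} (hk : Function.Surjective k)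
    (w : g ∘ₗ f = k ∘ₗ d) : Function.Surjective (pushoutDesc f d g k w) := by
  rw [← pushoutDesc_comp_pushoutInr f d g k w, coe_comp] at hk
  exact hk.of_comp

theorem comp_pushoutInr_comp {r : Pushout f d →ₗ[A] T} (hr : r ∘ₗ pushoutInl f d = id) :
    (r ∘ₗ pushoutInr f d) ∘ₗ d = f := by
  rw [comp_assoc, pushoutInr_comp, ← comp_assoc, hr, id_comp]

end LinearMap

open LinearMap

theorem Ext1IsZero.of_forall_exists_comp_eq {A : Type u} [Ring A] {S T : Type u}
    [AddCommGroup S] [Module A S] [AddCommGroup T] [Module A T]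
    (P : ProjectiveResolution (ModuleCat.of A S))
    (h : ∀ f : P.complex.X 1 ⟶ ModuleCat.of A T, P.complex.d 2 1 ≫ f = 0 →
      ∃ g, P.complex.d 1 0 ≫ g = f) :
    Ext1IsZero A S T := by
  have hexact : (P.complex.linearYonedaObj ℤ (ModuleCat.of A T)).ExactAt 1 := by
    rw [HomologicalComplex.exactAt_iff' _ 0 1 2 (by simp) (by simp),
      ShortComplex.moduleCat_exact_iff]
    exact h
  exact ModuleCat.subsingleton_of_isZero <|
    ((HomologicalComplex.exactAt_iff_isZero_homology _ 1).mp hexact).of_iso (P.isoExt 1 _)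

theorem Ext1IsZero.of_forall_exists_retraction {A : Type u} [Ring A] {S T : Type u}
    [AddCommGroup S] [Module A S] [AddCommGroup T] [Module A T]
    (h : ∀ (M : Type u) [AddCommGroup M] [Module A M] (i : T →ₗ[A] M) (p : M →ₗ[A] S),
      Function.Injective i → Function.Surjective p → Function.Exact i p →
        ∃ r : M →ₗ[A] T, r ∘ₗ i = LinearMap.id) :
    Ext1IsZero A S T := by
  let P := projectiveResolution (ModuleCat.of A S)
  refine .of_forall_exists_comp_eq P fun f hf ↦ ?_
  let d := (P.complex.d 1 0).hom
  let π := (P.π.f 0).hom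
  have hdπ : Function.Exact d π :=
    (ShortComplex.ShortExact.moduleCat_exact_iff_function_exact _).mp P.exact₀
  have hπ : Function.Surjective π := (ModuleCat.epi_iff_surjective _).mp inferInstance
  have w : 0 ∘ₗ f.hom = π ∘ₗ d := by rw [zero_comp, hdπ.linearMap_comp_eq_zero]
  have hker : ker d ≤ ker f.hom := fun x hx ↦ by
    obtain ⟨y, rfl⟩ := (ShortComplex.moduleCat_exact_iff _).mp (P.exact_succ 0) x hx
    exact congr($hf y)
  obtain ⟨r, hr⟩ := h _ _ _ (pushoutInl_injective f.hom d hker)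
    (pushoutDesc_surjective f.hom d 0 hπ w) (exact_pushoutInl_pushoutDesc f.hom d hdπ w)
  exact ⟨ModuleCat.ofHom (r ∘ₗ pushoutInr f.hom d),
    ModuleCat.hom_ext (comp_pushoutInr_comp _ _ hr)⟩

theorem exists_nonsplit_of_not_ext1IsZero {A : Type u} [Ring A] {S T : Type u}
    [AddCommGroup S] [Module A S] [AddCommGroup T] [Module A T] (h : ¬ Ext1IsZero A S T) :
    ∃ (M : Type u) (_ : AddCommGroup M) (_ : Module A M) (i : T →ₗ[A] M) (p : M →ₗ[A] S),
      Function.Injective i ∧ Function.Surjective p ∧ Function.Exact i p ∧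
        ¬ ∃ r : M →ₗ[A] T, r ∘ₗ i = LinearMap.id := by
  contrapose! h
  exact .of_forall_exists_retraction fun M _ _ i p hi hp hip ↦ h M _ _ i p hi hp hip

section Extension

variable {A T M S : Type*} [Ring A] [AddCommGroup T] [Module A T] [AddCommGroup M] [Module A M]
  [AddCommGroup S] [Module A S] {i : T →ₗ[A] M} {p : M →ₗ[A] S}

theorem LinearMap.exists_retraction_of_isCompl_range (hi : Function.Injective i)
    {N : Submodule A M} (h : IsCompl (range i) N) : ∃ r : M →ₗ[A] T, r ∘ₗ i = LinearMap.id :=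
  ⟨(LinearEquiv.ofInjective i hi).symm ∘ₗ (range i).projectionOnto N h, by
    ext t
    have hit : i t = LinearEquiv.ofInjective i hi t := rfl
    simp only [comp_apply, hit, Submodule.projectionOnto_apply_left,
      LinearEquiv.coe_coe, LinearEquiv.symm_apply_apply, id_apply]⟩

namespace Function.Exact

theorem eq_bot_or_eq_range_or_eq_top [IsSimpleModule A T] [IsSimpleModule A S]
    (hip : Function.Exact i p) (hi : Function.Injective i)
    (hns : ¬ ∃ r : M →ₗ[A] T, r ∘ₗ i = LinearMap.id) (N : Submodule A M) :
    N = ⊥ ∨ N = range i ∨ N = ⊤ := by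
  have hatom : IsAtom (range i) :=
    isSimpleModule_iff_isAtom.mp (IsSimpleModule.congr (LinearEquiv.ofInjective i hi).symm)
  have hker : ker p = range i := hip.linearMap_ker_eq
  rcases IsSimpleOrder.eq_bot_or_eq_top (N.map p) with hN | hN
  · have hle : N ≤ range i := hker ▸ le_ker_iff_map.mpr hN
    exact (hatom.le_iff.mp hle).imp_right .inl
  · have hsup : N ⊔ range i = ⊤ := by
      rw [← hker, ← Submodule.comap_map_eq, hN, Submodule.comap_top]
    rcases hatom.le_iff.mp (inf_le_right : N ⊓ range i ≤ range i) with h | h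
    · refine absurd (exists_retraction_of_isCompl_range hi (N := N) ⟨?_, ?_⟩) hns
      · exact disjoint_iff.mpr (inf_comm N _ ▸ h)
      · exact codisjoint_iff.mpr (sup_comm N _ ▸ hsup)
    · exact .inr (.inr (by rwa [sup_eq_left.mpr (inf_eq_right.mp h)] at hsup))

theorem length_eq_two [IsSimpleModule A T] [IsSimpleModule A S] (hip : Function.Exact i p)
    (hi : Function.Injective i) (hp : Function.Surjective p) : Module.length A M = 2 := by
  rw [Module.length_eq_add_of_exact i p hi hp hip, Module.length_eq_one, Module.length_eq_one]
  rfl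

theorem isFiniteLength [IsSimpleModule A T] [IsSimpleModule A S] (hip : Function.Exact i p)
    (hi : Function.Injective i) (hp : Function.Surjective p) : IsFiniteLength A M :=
  Module.length_ne_top_iff.mp (by simp [hip.length_eq_two hi hp])

theorem not_isSimpleModule [IsSimpleModule A T] [IsSimpleModule A S] (hip : Function.Exact i p)
    (hi : Function.Injective i) (hp : Function.Surjective p) : ¬ IsSimpleModule A M := by
  rw [← Module.length_eq_one_iff, hip.length_eq_two hi hp]
  decide

theorem endIsDivisionRing [IsSimpleModule A T] [IsSimpleModule A S]
    (hST : IsEmpty (S ≃ₗ[A] T)) (hip : Function.Exact i p) (hi : Function.Injective i)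
    (hp : Function.Surjective p) (hns : ¬ ∃ r : M →ₗ[A] T, r ∘ₗ i = LinearMap.id) :
    EndIsDivisionRing A M := by
  have : IsArtinian A M := (isFiniteLength_iff_isNoetherian_isArtinian.mp
    (hip.isFiniteLength hi hp)).2
  have : Nontrivial M := (Module.length_pos_iff (R := A)).mp (by simp [hip.length_eq_two hi hp])
  refine ⟨inferInstance, fun f hf ↦ ?_⟩
  have hsub := hip.eq_bot_or_eq_range_or_eq_top hi hns
  rcases hsub (ker f) with hk | hk | hk
  · exact (Module.End.isUnit_iff f).mpr
      (IsArtinian.bijective_of_injective_endomorphism f (ker_eq_bot.mp hk))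
  · let e : S ≃ₗ[A] range f := (p.quotKerEquivOfSurjective hp).symm ≪≫ₗ
      Submodule.quotEquivOfEq _ _ (hip.linearMap_ker_eq.trans hk.symm) ≪≫ₗ f.quotKerEquivRange
    rcases hsub (range f) with hr | hr | hr
    · exact absurd (range_eq_bot.mp hr) hf
    · exact hST.elim (e ≪≫ₗ LinearEquiv.ofEq _ _ hr ≪≫ₗ (LinearEquiv.ofInjective i hi).symm)
    · exact absurd (IsSimpleModule.congr (e ≪≫ₗ LinearEquiv.ofEq _ _ hr ≪≫ₗ
        Submodule.topEquiv).symm) (hip.not_isSimpleModule hi hp)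
  · exact absurd (ker_eq_top.mp hk) hf

end Function.Exact

end Extension

/-- If some pair of nonisomorphic simple right `R`-modules `S`, `T`
satisfies `Ext¹_R(S, T) ≠ 0`, then there is a right `R`-module of finite length that is not
simple and whose endomorphism ring is a division ring. -/
theorem exists_nonsimple_finiteLength_endIsDivisionRing (R : Type u) [Ring R]
    (S T : Type u) [AddCommGroup S] [Module Rᵐᵒᵖ S] [AddCommGroup T] [Module Rᵐᵒᵖ T]
    (hS : IsSimpleModule Rᵐᵒᵖ S) (hT : IsSimpleModule Rᵐᵒᵖ T)
    (hST : IsEmpty (S ≃ₗ[Rᵐᵒᵖ] T)) (hext : ¬ Ext1IsZero Rᵐᵒᵖ S T) :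
    ∃ (M : Type u) (instG : AddCommGroup M), letI := instG; ∃ instM : Module Rᵐᵒᵖ M,
      letI := instM;
      IsFiniteLength Rᵐᵒᵖ M ∧ ¬ IsSimpleModule Rᵐᵒᵖ M ∧ EndIsDivisionRing Rᵐᵒᵖ M := by
  obtain ⟨M, _, _, i, p, hi, hp, hip, hns⟩ := exists_nonsplit_of_not_ext1IsZero hext
  exact ⟨M, _, _, hip.isFiniteLength hi hp, hip.not_isSimpleModule hi hp,
    hip.endIsDivisionRing hST hi hp hns⟩
end

section
/- Let R be a ring and let M be a nonzero isotypic right R-module of finite length that is not simple. Then M has a nonzero nilpotent endomorphism; in particular End(M_R) is not a division ring. -/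
universe u

open CategoryTheory

/-!
A module of finite length that is not simple has a simple submodule `S` contained in a maximal
submodule `N`. Isotypy makes the simple quotient `M ⧸ N` isomorphic to `S`, and the composite
`M ↠ M ⧸ N ≅ S ↪ M` is then a nonzero endomorphism whose image `S` lies in its kernel `N`, so it
squares to zero.
-/

theorem exists_isAtom_isCoatom_le {α : Type*} [PartialOrder α] [BoundedOrder α] [Nontrivial α]
    [IsAtomic α] [IsCoatomic α] (h : ¬IsAtom (⊤ : α)) :
    ∃ a b : α, IsAtom a ∧ IsCoatom b ∧ a ≤ b := by
  obtain ⟨a, ha, -⟩ := (eq_bot_or_exists_atom_le (⊤ : α)).resolve_left top_ne_bot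
  have ha_ne_top : a ≠ ⊤ := by
    rintro rfl
    exact h ha
  obtain ⟨b, hb, hab⟩ := (eq_top_or_exists_le_coatom a).resolve_left ha_ne_top
  exact ⟨a, b, ha, hb, hab⟩

namespace Submodule

variable {A M : Type*} [Ring A] [AddCommGroup M] [Module A M]

def topQuotientEquivQuotient (N : Submodule A M) :
    ((⊤ : Submodule A M) ⧸ N.comap (⊤ : Submodule A M).subtype) ≃ₗ[A] M ⧸ N :=
  Quotient.equiv _ N topEquiv <| by
    ext x
    simp

theorem exists_ne_zero_mul_self_eq_zero {S N : Submodule A M} (hSN : S ≤ N) (hN : N ≠ ⊤)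
    (e : (M ⧸ N) ≃ₗ[A] S) : ∃ f : Module.End A M, f ≠ 0 ∧ f * f = 0 := by
  set f : Module.End A M := S.subtype ∘ₗ e.toLinearMap ∘ₗ N.mkQ
  have hN_le_ker : N ≤ LinearMap.ker f := by
    intro x hx
    simp [f, (Quotient.mk_eq_zero N).mpr hx]
  have hrange_le : LinearMap.range f ≤ S := by
    rintro _ ⟨x, rfl⟩
    exact (e (N.mkQ x)).2
  refine ⟨f, fun hf => hN ?_, LinearMap.range_le_ker_iff.mp (hrange_le.trans (hSN.trans hN_le_ker))⟩
  refine eq_top_iff.mpr fun x _ => (Quotient.mk_eq_zero N).mp ?_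
  have : e (N.mkQ x) = 0 := Subtype.ext (LinearMap.congr_fun hf x)
  simpa using this

end Submodule

theorem IsIsotypicModule.nonempty_linearEquiv {A M : Type*} [Ring A] [AddCommGroup M]
    [Module A M] (h : IsIsotypicModule A M) (S N : Submodule A M) [IsSimpleModule A S]
    [IsSimpleModule A (M ⧸ N)] : Nonempty ((M ⧸ N) ≃ₗ[A] S) := by
  have e₁ := (⊥ : Submodule A S).quotEquivOfEqBot rfl
  have e₂ := N.topQuotientEquivQuotient
  obtain ⟨e⟩ := h S ⊤ ⊥ _ (.congr e₁) (.congr e₂)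
  exact ⟨e₂.symm ≪≫ₗ e.symm ≪≫ₗ e₁⟩

/-- A nonzero isotypic right `R`-module of finite length that is not simple
has a nonzero nilpotent endomorphism; in particular its endomorphism ring is not a division
ring. -/
theorem exists_nilpotent_endomorphism_of_isotypic_not_simple (R : Type u) [Ring R]
    (M : Type u) [AddCommGroup M] [Module Rᵐᵒᵖ M] [Nontrivial M]
    (hiso : IsIsotypicModule Rᵐᵒᵖ M) (hfl : IsFiniteLength Rᵐᵒᵖ M)
    (hns : ¬ IsSimpleModule Rᵐᵒᵖ M) :
    (∃ f : Module.End Rᵐᵒᵖ M, f ≠ 0 ∧ IsNilpotent f) ∧ ¬ EndIsDivisionRing Rᵐᵒᵖ M := by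
  obtain ⟨_, _⟩ := isFiniteLength_iff_isNoetherian_isArtinian.mp hfl
  have htop : ¬IsAtom (⊤ : Submodule Rᵐᵒᵖ M) := fun h =>
    hns ((isSimpleModule_iff _ _).mpr (isSimpleOrder_iff_isAtom_top.mpr h))
  obtain ⟨S, N, hS, hN, hSN⟩ := exists_isAtom_isCoatom_le htop
  have := isSimpleModule_iff_isAtom.mpr hS
  have := isSimpleModule_iff_isCoatom.mpr hN
  obtain ⟨e⟩ := hiso.nonempty_linearEquiv S N
  obtain ⟨f, hf, hff⟩ := Submodule.exists_ne_zero_mul_self_eq_zero hSN hN.1 e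
  refine ⟨⟨f, hf, 2, by rw [pow_two, hff]⟩, fun ⟨_, hunit⟩ => hf ?_⟩
  exact (hunit f hf).mul_left_eq_zero.mp hff
end

section
/- Let R be a commutative ring and let M be an R-module of finite length whose endomorphism ring End(M_R) is a division ring. Then M is a simple module. -/
universe u

open CategoryTheory

/-!
If `r ∉ ann M`, then `r • ·` is a nonzero endomorphism, hence injective; so every nonzero
submodule has the same annihilator as `M`. Applied to a simple submodule (which exists because `M`
is artinian) this makes `ann M` maximal, so `M` is a vector space over `R ⧸ ann M` and therefore
semisimple. In a semisimple module the projection onto a nonzero proper submodule along a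
complement is a nonzero endomorphism that is not surjective.
-/

variable {R M : Type*} [AddCommGroup M]

theorem Module.nontrivial_of_nontrivial_end [Ring R] [Module R M]
    [Nontrivial (Module.End R M)] : Nontrivial M := by
  by_contra hM
  rw [not_nontrivial_iff_subsingleton] at hM
  exact not_subsingleton (Module.End R M) inferInstance

theorem Module.annihilator_submodule_eq_of_forall_isUnit [CommRing R] [Module R M]
    (h : ∀ f : Module.End R M, f ≠ 0 → IsUnit f) {N : Submodule R M} (hN : N ≠ ⊥) :
    Module.annihilator R N = Module.annihilator R M := by
  refine le_antisymm (fun r hr ↦ ?_) (N.subtype.annihilator_le_of_injective N.injective_subtype)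
  by_contra hrM
  have hr_ne : LinearMap.lsmul R M r ≠ 0 := fun h0 ↦
    hrM (Module.mem_annihilator.mpr fun m ↦ by simpa using LinearMap.congr_fun h0 m)
  obtain ⟨x, hxN, hx0⟩ := N.ne_bot_iff.mp hN
  refine hx0 (((Module.End.isUnit_iff _).mp (h _ hr_ne)).injective ?_)
  simpa [Subtype.ext_iff] using Module.mem_annihilator.mp hr ⟨x, hxN⟩

theorem Module.IsTorsionBySet.isSemisimpleModule_of_isMaximal [CommRing R] [Module R M]
    {I : Ideal R} [I.IsMaximal] (hM : Module.IsTorsionBySet R M I) :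
    IsSemisimpleModule R M := by
  let := hM.module
  let := Ideal.Quotient.field I
  exact hM.isSemisimpleModule_iff.mp inferInstance

theorem IsSemisimpleModule.isSimpleModule_of_forall_isUnit [Ring R] [Module R M]
    [IsSemisimpleModule R M] [Nontrivial M] (h : ∀ f : Module.End R M, f ≠ 0 → IsUnit f) :
    IsSimpleModule R M := by
  refine (isSimpleModule_iff R M).mpr ⟨fun N ↦ or_iff_not_imp_left.mpr fun hN ↦ ?_⟩
  obtain ⟨P, hNP⟩ := exists_isCompl N
  have hrange : LinearMap.range (N.projection P hNP) = N := Submodule.range_projection hNP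
  have hproj : N.projection P hNP ≠ 0 := fun h0 ↦ hN (by rw [← hrange, h0, LinearMap.range_zero])
  rw [← hrange, LinearMap.range_eq_top]
  exact ((Module.End.isUnit_iff _).mp (h _ hproj)).surjective

/-- Over a commutative ring, every module of finite length whose endomorphism
ring is a division ring is simple. -/
theorem isSimpleModule_of_commutative_of_finiteLength (R : Type u) [CommRing R]
    (M : Type u) [AddCommGroup M] [Module R M]
    (hfl : IsFiniteLength R M) (hM : EndIsDivisionRing R M) :
    IsSimpleModule R M := by
  obtain ⟨hEnd, hunit⟩ := hM
  have : Nontrivial M := Module.nontrivial_of_nontrivial_end (R := R)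
  have : IsArtinian R M := (isFiniteLength_iff_isNoetherian_isArtinian.mp hfl).2
  obtain ⟨S, hS⟩ := IsAtomic.exists_atom (Submodule R M)
  have : IsSimpleModule R S := isSimpleModule_iff_isAtom.mpr hS
  have hmax : (Module.annihilator R M).IsMaximal := by
    rw [← Module.annihilator_submodule_eq_of_forall_isUnit hunit hS.1]
    exact IsSimpleModule.annihilator_isMaximal
  have : IsSemisimpleModule R M :=
    (Module.isTorsionBySet_annihilator R M).isSemisimpleModule_of_isMaximal
  exact IsSemisimpleModule.isSimpleModule_of_forall_isUnit hunit
end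

section
/- Let R be a domain satisfying the right Ore condition, i.e., for all nonzero a, b ∈ R one has aR ∩ bR ≠ {0}. Then every right R-module whose endomorphism ring is a division ring is simple if and only if R is a division ring. -/
universe u

open CategoryTheory

/-!
Right `R`-modules are `Rᵐᵒᵖ`-modules, and the Ore condition makes the nonzero elements of `Rᵐᵒᵖ`
an Ore set, so its classical ring of fractions `Q` is a division ring. Every `Rᵐᵒᵖ`-linear
endomorphism of `Q` is right multiplication by its value at `1`, since it commutes with the
denominators, which act invertibly; hence `End(Q) ≅ Qᵐᵒᵖ` is a division ring. If `Q` is simple,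
it is generated by `1`, so `a⁻¹` lies in the image of `R` for every `a ≠ 0`.

Conversely, over a division ring every module is semisimple, and a semisimple module whose
endomorphism ring is a division ring is simple: the projection onto a direct summand is an
idempotent, and an invertible idempotent is `1`.
-/

section Semisimple

variable {R M : Type*} [Ring R] [AddCommGroup M] [Module R M]

theorem EndIsDivisionRing.of_ringEquiv {D : Type*} [DivisionRing D] (e : Module.End R M ≃+* D) :
    EndIsDivisionRing R M :=
  ⟨e.toEquiv.nontrivial, fun f hf ↦
    (isUnit_map_iff e f).mp (isUnit_iff_ne_zero.mpr ((map_ne_zero_iff e e.injective).mpr hf))⟩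

theorem IsSemisimpleModule.isSimpleModule_of_endIsDivisionRing [IsSemisimpleModule R M]
    (h : EndIsDivisionRing R M) : IsSimpleModule R M := by
  obtain ⟨hEnd, hunit⟩ := h
  have : Nontrivial M := by
    by_contra! hM
    exact not_subsingleton (Module.End R M) inferInstance
  refine { eq_bot_or_eq_top := fun N ↦ ?_ }
  obtain ⟨N', hc⟩ := exists_isCompl N
  by_cases hπ : N.projection N' hc = 0
  · left
    rw [← Submodule.range_projection hc, hπ, LinearMap.range_zero]
  · right
    have hπ1 : N.projection N' hc = 1 :=
      (IsIdempotentElem.iff_eq_one_of_isUnit (hunit _ hπ)).mp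
        (Submodule.isIdempotentElem_projection hc)
    rw [← Submodule.range_projection hc, hπ1, Module.End.one_eq_id, LinearMap.range_id]

end Semisimple

namespace OreLocalization

open nonZeroDivisors

theorem nonempty_oreSet_nonZeroDivisors_op {R : Type*} [Ring R] [IsDomain R]
    (hOre : ∀ a b : R, a ≠ 0 → b ≠ 0 → ∃ x y : R, a * x = b * y ∧ a * x ≠ 0) :
    Nonempty (OreSet Rᵐᵒᵖ⁰) := by
  refine nonempty_oreSet_iff_of_noZeroDivisors.mpr fun r s ↦ ?_
  rcases eq_or_ne r 0 with rfl | hr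
  · exact ⟨0, 1, by simp⟩
  obtain ⟨x, y, hxy, hx⟩ := hOre r.unop (s : Rᵐᵒᵖ).unop (by simpa using hr) (by simp)
  refine ⟨.op y, ⟨.op x, mem_nonZeroDivisors_of_ne_zero ?_⟩, MulOpposite.unop_injective hxy⟩
  simpa using right_ne_zero_of_mul hx

section Ring

variable {R : Type*} [Ring R] {S : Submonoid R} [OreSet S]

theorem moduleEnd_ext {f g : Module.End R R[S⁻¹]} (h : f 1 = g 1) : f = g := by
  ext x
  induction x using OreLocalization.ind with | _ r s
  have hs : (s : R) • (r /ₒ s : R[S⁻¹]) = r • 1 := by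
    rw [← oreDiv_one_smul, ← oreDiv_one_smul, smul_eq_mul, smul_eq_mul,
      OreLocalization.mul_cancel, mul_one]
  apply (numerator_isUnit s).mul_left_cancel
  rw [numeratorHom_apply, ← smul_eq_mul, ← smul_eq_mul, oreDiv_one_smul, oreDiv_one_smul,
    ← map_smul, ← map_smul, hs, map_smul, map_smul, h]

theorem moduleEnd_apply_eq_mul (f : Module.End R R[S⁻¹]) (x : R[S⁻¹]) : f x = x * f 1 :=
  LinearMap.congr_fun (moduleEnd_ext (g := LinearMap.mulRight R (f 1)) (one_mul _).symm) x

def moduleEndEquiv : Module.End R R[S⁻¹] ≃+* R[S⁻¹]ᵐᵒᵖ where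
  toFun f := .op (f 1)
  invFun x := LinearMap.mulRight R x.unop
  left_inv f := moduleEnd_ext (one_mul _)
  right_inv x := by simp
  map_mul' f g := by simp [Module.End.mul_apply, moduleEnd_apply_eq_mul f (g 1)]
  map_add' _ _ := rfl

end Ring

section Domain

variable {R : Type*} [Ring R] [IsDomain R] [OreSet R⁰]

theorem endIsDivisionRing : EndIsDivisionRing R R[R⁰⁻¹] :=
  .of_ringEquiv moduleEndEquiv

theorem isUnit_of_isSimpleModule [IsSimpleModule R R[R⁰⁻¹]] {a : R} (ha : a ≠ 0) :
    IsUnit a := by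
  let a' : R⁰ := ⟨a, mem_nonZeroDivisors_of_ne_zero ha⟩
  obtain ⟨c, hc⟩ := IsSimpleModule.toSpanSingleton_surjective R
    (one_ne_zero : (1 : R[R⁰⁻¹]) ≠ 0) (1 /ₒ a')
  have hac : numeratorHom (a * c) = (numeratorHom 1 : R[R⁰⁻¹]) := calc
    numeratorHom (a * c) = a • c • (1 : R[R⁰⁻¹]) := by
      rw [← mul_smul, numeratorHom_apply, ← oreDiv_one_smul, smul_eq_mul, mul_one]
    _ = numeratorHom 1 := by
      rw [show c • (1 : R[R⁰⁻¹]) = 1 /ₒ a' from hc, ← oreDiv_one_smul, smul_eq_mul, map_one]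
      exact OreLocalization.mul_inv a' 1
  exact .of_mul_eq_one c (numeratorHom_inj (S := R⁰) inf_le_left hac)

end Domain

end OreLocalization

/-- Let `R` be a domain satisfying the right Ore condition (any two nonzero
right ideals intersect nontrivially, i.e. for nonzero `a, b` one has `aR ∩ bR ≠ 0`).  Then
every right `R`-module whose endomorphism ring is a division ring is simple if and only if
`R` is a division ring. -/
theorem ore_domain_csl_iff_divisionRing (R : Type u) [Ring R] [IsDomain R]
    (hOre : ∀ a b : R, a ≠ 0 → b ≠ 0 → ∃ x y : R, a * x = b * y ∧ a * x ≠ 0) :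
    (∀ (M : Type u) [AddCommGroup M] [Module Rᵐᵒᵖ M],
        EndIsDivisionRing Rᵐᵒᵖ M → IsSimpleModule Rᵐᵒᵖ M) ↔
      ∀ a : R, a ≠ 0 → IsUnit a := by
  constructor
  · intro h a ha
    obtain ⟨_⟩ := OreLocalization.nonempty_oreSet_nonZeroDivisors_op hOre
    have := h _ OreLocalization.endIsDivisionRing
    exact (OreLocalization.isUnit_of_isSimpleModule (a := MulOpposite.op a)
      (by simpa using ha)).unop
  · intro hunit M _ _ hM
    let : DivisionRing Rᵐᵒᵖ := DivisionRing.ofIsUnitOrEqZero fun a ↦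
      (eq_or_ne a 0).symm.imp_left fun ha ↦ (hunit a.unop (by simpa using ha)).op
    exact IsSemisimpleModule.isSimpleModule_of_endIsDivisionRing hM
end
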